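/- If an extended open graph (G, I, O, λ) has a gflow and X ∈ λ(u) for every u ∈ Iᶜ ∩ Oᶜ, then (G, I, O, λ) has an X-NF gflow, i.e., a gflow g with Odd(g(u)) ⊆ {u} ∪ O for all u ∈ Oᶜ. -/

import Mathlib

open scoped symmDiff

inductive Pauli | X | Y | Z
deriving DecidableEq

inductive MPlane | XY | XZ | YZ
deriving DecidableEq

/-- The set of Pauli operators defining a measurement plane. -/
def MPlane.paulis : MPlane → Finset Pauli
  | .XY => {.X, .Y}
  | .XZ => {.X, .Z}
  | .YZ => {.Y, .Z}

variable {V : Type} [Fintype V] [DecidableEq V]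

/-- Odd neighbourhood: vertices with an odd number of neighbours in `A`. -/
def oddNbhd (G : SimpleGraph V) [DecidableRel G.Adj] (A : Finset V) : Finset V :=
  Finset.univ.filter fun w => Odd (A.filter (G.Adj w)).card

/-- `f` is extensive w.r.t. the strict order `r`. -/
def IsExtensive (O : Finset V) (r : V → V → Prop) (f : V → Finset V) : Prop :=
  ∀ u ∉ O, ∀ v ∈ f u, v ≠ u → r u v

/-- gflow of an extended open graph `(G, I, O, lam)`. -/
def IsGflow (G : SimpleGraph V) [DecidableRel G.Adj]
    (I O : Finset V) (lam : V → MPlane) (g : V → Finset V) : Prop :=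
  (∀ u ∉ O, g u ⊆ Iᶜ) ∧
  (∃ r : V → V → Prop, IsStrictOrder V r ∧
    IsExtensive O r (fun u => g u ∪ oddNbhd G (g u))) ∧
  ∀ u ∉ O,
    (lam u = .XY → u ∈ oddNbhd G (g u) ∧ u ∉ g u) ∧
    (lam u = .XZ → u ∈ g u ∧ u ∈ oddNbhd G (g u)) ∧
    (lam u = .YZ → u ∈ g u ∧ u ∉ oddNbhd G (g u))

/-- σ-normal forms for gflows. -/
def IsNF (σ : Pauli) (G : SimpleGraph V) [DecidableRel G.Adj]
    (O : Finset V) (g : V → Finset V) : Prop :=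
  match σ with
  | .X => ∀ u ∉ O, oddNbhd G (g u) ⊆ insert u O
  | .Y => ∀ u ∉ O, (g u ∆ oddNbhd G (g u)) ⊆ insert u O
  | .Z => ∀ u ∉ O, g u ⊆ insert u O

/-!
Correct the gflow backwards along its order. If every vertex `v` later than `u` already has a
correction set `B` with `Odd(B) \ O = {v}`, each offending vertex `v ∈ Odd(g u) \ ({u} ∪ O)` is
removed by replacing `g u` with `g u ∆ B`: `Odd` is additive for `∆`, and `u` lies neither in `B`
nor in `Odd(B)`, so the conditions at `u` survive. This needs `v ∈ Odd(B)`, which fails only in the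
plane `YZ`; but a `YZ` vertex lies in its own correction set, hence is not an input, and so the
hypothesis excludes it.
-/

lemma Finset.card_symmDiff_add_two_mul_card_inter {α : Type*} [DecidableEq α] (s t : Finset α) :
    (s ∆ t).card + 2 * (s ∩ t).card = s.card + t.card := by
  rw [symmDiff_eq_sup_sdiff_inf, ← Finset.card_union_add_card_inter s t]
  have := Finset.card_sdiff_of_subset (Finset.inter_subset_union (s := s) (t := t))
  have := Finset.card_le_card (Finset.inter_subset_union (s := s) (t := t))
  simp only [Finset.sup_eq_union, Finset.inf_eq_inter] at *
  omega

lemma Finset.odd_card_symmDiff {α : Type*} [DecidableEq α] (s t : Finset α) :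
    Odd (s ∆ t).card ↔ ¬(Odd s.card ↔ Odd t.card) := by
  have := Finset.card_symmDiff_add_two_mul_card_inter s t
  simp only [Nat.odd_iff]
  omega

lemma oddNbhd_symmDiff (G : SimpleGraph V) [DecidableRel G.Adj] (A B : Finset V) :
    oddNbhd G (A ∆ B) = oddNbhd G A ∆ oddNbhd G B := by
  ext w
  have hfilter : (A ∆ B).filter (G.Adj w) = A.filter (G.Adj w) ∆ B.filter (G.Adj w) := by
    ext x
    simp only [Finset.mem_symmDiff, Finset.mem_filter]
    tauto
  simp only [oddNbhd, Finset.mem_filter, Finset.mem_univ, true_and, Finset.mem_symmDiff, hfilter,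
    Finset.odd_card_symmDiff]
  tauto

structure IsGflowAt (G : SimpleGraph V) [DecidableRel G.Adj] (I : Finset V) (lam : V → MPlane)
    (r : V → V → Prop) (u : V) (A : Finset V) : Prop where
  subset_compl : A ⊆ Iᶜ
  extensive : ∀ v ∈ A ∪ oddNbhd G A, v ≠ u → r u v
  plane : (lam u = .XY → u ∈ oddNbhd G A ∧ u ∉ A) ∧
    (lam u = .XZ → u ∈ A ∧ u ∈ oddNbhd G A) ∧
    (lam u = .YZ → u ∈ A ∧ u ∉ oddNbhd G A)

lemma isGflow_iff (G : SimpleGraph V) [DecidableRel G.Adj] (I O : Finset V) (lam : V → MPlane)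
    (g : V → Finset V) :
    IsGflow G I O lam g ↔
      ∃ r : V → V → Prop, IsStrictOrder V r ∧ ∀ u ∉ O, IsGflowAt G I lam r u (g u) := by
  constructor
  · rintro ⟨hI, ⟨r, hr, hext⟩, hplane⟩
    exact ⟨r, hr, fun u hu => ⟨hI u hu, hext u hu, hplane u hu⟩⟩
  · rintro ⟨r, hr, h⟩
    exact ⟨fun u hu => (h u hu).subset_compl, ⟨r, hr, fun u hu => (h u hu).extensive⟩,
      fun u hu => (h u hu).plane⟩

namespace IsGflowAt

variable {G : SimpleGraph V} [DecidableRel G.Adj] {I : Finset V} {lam : V → MPlane}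
  {r : V → V → Prop} {u v : V} {A B : Finset V}

lemma mem_oddNbhd (hA : IsGflowAt G I lam r u A) (hX : u ∉ I → Pauli.X ∈ (lam u).paulis) :
    u ∈ oddNbhd G A := by
  rcases hlam : lam u
  · exact (hA.plane.1 hlam).1
  · exact (hA.plane.2.1 hlam).2
  · have huI : u ∉ I := by simpa using hA.subset_compl (hA.plane.2.2 hlam).1
    simpa [hlam, MPlane.paulis] using hX huI

lemma symmDiff [IsStrictOrder V r] (hA : IsGflowAt G I lam r u A) (hB : IsGflowAt G I lam r v B)
    (huv : r u v) (huB : u ∉ oddNbhd G B) : IsGflowAt G I lam r u (A ∆ B) := by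
  have hvu : ¬r v u := fun hvu => irrefl u (_root_.trans huv hvu)
  have huB' : u ∉ B := fun h =>
    hvu (hB.extensive u (Finset.mem_union_left _ h) (ne_of_irrefl huv))
  have hmem : u ∈ A ∆ B ↔ u ∈ A := by simp [Finset.mem_symmDiff, huB']
  have hodd : u ∈ oddNbhd G (A ∆ B) ↔ u ∈ oddNbhd G A := by
    simp [oddNbhd_symmDiff, Finset.mem_symmDiff, huB]
  refine ⟨fun w hw => ?_, fun w hw hwu => ?_, by simpa only [hmem, hodd] using hA.plane⟩
  · rcases Finset.mem_union.1 (Finset.symmDiff_subset_union hw) with hw | hw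
    · exact hA.subset_compl hw
    · exact hB.subset_compl hw
  · rw [oddNbhd_symmDiff] at hw
    have hw' : w ∈ A ∪ oddNbhd G A ∨ w ∈ B ∪ oddNbhd G B := by
      simp only [Finset.mem_union, Finset.mem_symmDiff] at hw ⊢
      tauto
    rcases hw' with hw' | hw'
    · exact hA.extensive w hw' hwu
    · rcases eq_or_ne w v with rfl | hwv
      · exact huv
      · exact _root_.trans huv (hB.extensive w hw' hwv)

lemma exists_oddNbhd_subset [IsStrictOrder V r] {O : Finset V} (hu : u ∉ O)
    (hA : IsGflowAt G I lam r u A)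
    (hcorr : ∀ v ∉ O, r u v → ∃ B, IsGflowAt G I lam r v B ∧ v ∈ oddNbhd G B ∧
      oddNbhd G B ⊆ insert v O) :
    ∃ A', IsGflowAt G I lam r u A' ∧ oddNbhd G A' ⊆ insert u O := by
  induction hn : (oddNbhd G A \ insert u O).card using Nat.strong_induction_on
    generalizing A with
  | _ n ih =>
    obtain hbad | ⟨v, hv⟩ := (oddNbhd G A \ insert u O).eq_empty_or_nonempty
    · exact ⟨A, hA, Finset.sdiff_eq_empty_iff_subset.mp hbad⟩
    obtain ⟨hvA, hvu, hvO⟩ : v ∈ oddNbhd G A ∧ v ≠ u ∧ v ∉ O := by simpa using hv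
    have huv : r u v := hA.extensive v (Finset.mem_union_right _ hvA) hvu
    obtain ⟨B, hB, hvB, hBO⟩ := hcorr v hvO huv
    have huB : u ∉ oddNbhd G B := fun h => by
      rcases Finset.mem_insert.1 (hBO h) with h | h
      · exact irrefl_of r u (h ▸ huv)
      · exact hu h
    have hbad : oddNbhd G (A ∆ B) \ insert u O = (oddNbhd G A \ insert u O).erase v := by
      ext w
      have hBw := @hBO w
      simp only [oddNbhd_symmDiff, Finset.mem_sdiff, Finset.mem_symmDiff, Finset.mem_erase,
        Finset.mem_insert] at hBw ⊢
      grind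
    exact ih _ (hn ▸ hbad ▸ Finset.card_erase_lt_of_mem hv) (hA.symmDiff hB huv huB) rfl

end IsGflowAt

lemma exists_XNF_gflowAt (G : SimpleGraph V) [DecidableRel G.Adj] {I O : Finset V}
    {lam : V → MPlane} {r : V → V → Prop} [IsStrictOrder V r] {g : V → Finset V}
    (hg : ∀ u ∉ O, IsGflowAt G I lam r u (g u))
    (hplane : ∀ u, u ∉ I → u ∉ O → Pauli.X ∈ (lam u).paulis) (u : V) (hu : u ∉ O) :
    ∃ A, IsGflowAt G I lam r u A ∧ oddNbhd G A ⊆ insert u O := by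
  induction u using (Finite.wellFounded_of_trans_of_irrefl (Function.swap r)).induction with
  | _ u ih =>
    refine (hg u hu).exists_oddNbhd_subset hu fun v hv huv => ?_
    obtain ⟨B, hB, hBO⟩ := ih v huv hv
    exact ⟨B, hB, hB.mem_oddNbhd (hplane v · hv), hBO⟩

/-- Theorem 1 for σ = X: if every non-input non-output measurement plane contains X,
then a gflow can be put into X-normal form. -/
theorem exists_XNF_gflow (G : SimpleGraph V) [DecidableRel G.Adj]
    (I O : Finset V) (lam : V → MPlane)
    (h : ∃ g : V → Finset V, IsGflow G I O lam g)
    (hplane : ∀ u, u ∉ I → u ∉ O → Pauli.X ∈ (lam u).paulis) :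
    ∃ g : V → Finset V, IsGflow G I O lam g ∧ IsNF .X G O g := by
  obtain ⟨g, hg⟩ := h
  obtain ⟨r, hr, hgr⟩ := (isGflow_iff G I O lam g).1 hg
  choose! f hf using exists_XNF_gflowAt G hgr hplane
  exact ⟨f, (isGflow_iff G I O lam f).2 ⟨r, hr, fun u hu => (hf u hu).1⟩, fun u hu => (hf u hu).2⟩
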